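/- arXiv:2305.11428 — 2 statements merged into one kernel-verified Lean document; each statement's English description precedes it below -/
import Mathlib

section
/- Let c ≥ 2 be an integer, let G be a finite simple undirected graph on a vertex set V of size n in which every vertex has degree at least n/c − 1, and let α be a natural number satisfying 2^c·α < n/c − 1. Then the equivalence relation ~_α on V has at most c equivalence classes. -/
/-! If there were `c + 1` classes, pick representatives `w i` and, for each ordered pair, an
`α`-cut `T i j` with `w i ∈ T i j ∌ w j`. The sets `A i = ⋂_{j ≠ i} (T i j \ T j i)` are pairwise
disjoint, contain `w i` and have at most `2cα` boundary edges, so the smallest one, of size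
`a ≤ n / (c + 1)`, is a nonempty set with a small boundary. Summing the degree bound over it gives
`a n ≤ c a² + c |∂A|`, which is incompatible with `2^c α < n / c - 1`. -/

open Finset

/-- Number of edges of `G` with one endpoint in `S` and the other in `T`
(for disjoint `S`, `T`, each such edge is counted exactly once as an ordered pair). -/
def crossEdges {V : Type*} [Fintype V] [DecidableEq V] (G : SimpleGraph V)
    [DecidableRel G.Adj] (S T : Finset V) : ℕ :=
  ((S ×ˢ T).filter fun p => G.Adj p.1 p.2).card

/-- Number of edges of `G` with exactly one endpoint in `S`. -/
def cutEdges {V : Type*} [Fintype V] [DecidableEq V] (G : SimpleGraph V)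
    [DecidableRel G.Adj] (S : Finset V) : ℕ :=
  crossEdges G S Sᶜ

/-- The equivalence relation `~_α`: `u ~_α v` iff for every `S` with `|edges_G(S)| ≤ α`,
`u ∈ S ↔ v ∈ S`. -/
def cutRel {V : Type*} [Fintype V] [DecidableEq V] (G : SimpleGraph V)
    [DecidableRel G.Adj] (α : ℕ) (u v : V) : Prop :=
  ∀ S : Finset V, cutEdges G S ≤ α → (u ∈ S ↔ v ∈ S)

instance {V : Type*} [Fintype V] [DecidableEq V] (G : SimpleGraph V)
    [DecidableRel G.Adj] (α : ℕ) (u v : V) : Decidable (cutRel G α u v) :=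
  inferInstanceAs (Decidable (∀ S : Finset V, cutEdges G S ≤ α → (u ∈ S ↔ v ∈ S)))

/-- The `~_α`-equivalence class of a vertex `v`. -/
def cutClass {V : Type*} [Fintype V] [DecidableEq V] (G : SimpleGraph V)
    [DecidableRel G.Adj] (α : ℕ) (v : V) : Finset V :=
  Finset.univ.filter fun u => cutRel G α u v

/-- The set of all `~_α`-equivalence classes. -/
def cutClasses {V : Type*} [Fintype V] [DecidableEq V] (G : SimpleGraph V)
    [DecidableRel G.Adj] (α : ℕ) : Finset (Finset V) :=
  Finset.univ.image (cutClass G α)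

open Function

namespace SimpleGraph

variable {V : Type*} [Fintype V] [DecidableEq V] (G : SimpleGraph V) [DecidableRel G.Adj]

lemma cutEdges_compl (S : Finset V) : cutEdges G Sᶜ = cutEdges G S := by
  unfold cutEdges crossEdges
  rw [compl_compl]
  apply Finset.card_nbij' Prod.swap Prod.swap <;>
    simp +contextual [G.adj_comm, Set.MapsTo, Set.LeftInvOn, Set.RightInvOn]

lemma cutEdges_inter_le (S T : Finset V) :
    cutEdges G (S ∩ T) ≤ cutEdges G S + cutEdges G T := by
  unfold cutEdges crossEdges
  refine (Finset.card_le_card fun p hp => ?_).trans (Finset.card_union_le _ _)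
  simp only [Finset.mem_filter, Finset.mem_product, Finset.mem_union, Finset.mem_compl,
    Finset.mem_inter] at hp ⊢
  tauto

lemma cutEdges_inf_le {ι : Type*} (s : Finset ι) (f : ι → Finset V) :
    cutEdges G (s.inf f) ≤ ∑ i ∈ s, cutEdges G (f i) := by
  induction s using Finset.cons_induction with
  | empty => simp [cutEdges, crossEdges]
  | cons a s _ ih =>
    rw [Finset.inf_cons, Finset.sum_cons]
    exact (cutEdges_inter_le G _ _).trans (Nat.add_le_add_left ih _)

lemma cutEdges_eq_sum (A : Finset V) :
    cutEdges G A = ∑ v ∈ A, #{u ∈ Aᶜ | G.Adj v u} := by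
  simp only [cutEdges, crossEdges, Finset.card_filter, Finset.sum_product]

lemma degree_add_one_le {A : Finset V} {v : V} (hv : v ∈ A) :
    G.degree v + 1 ≤ #{u ∈ Aᶜ | G.Adj v u} + #A := by
  have hsub : G.neighborFinset v ⊆ A.erase v ∪ {u ∈ Aᶜ | G.Adj v u} := fun u hu => by
    rw [mem_neighborFinset] at hu
    by_cases huA : u ∈ A
    · exact Finset.mem_union_left _ (Finset.mem_erase.2 ⟨hu.ne.symm, huA⟩)
    · exact Finset.mem_union_right _ (by simp [huA, hu])
  have := (Finset.card_le_card hsub).trans (Finset.card_union_le _ _)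
  rw [card_neighborFinset_eq_degree, Finset.card_erase_of_mem hv] at this
  have := Finset.card_pos.2 ⟨v, hv⟩
  omega

lemma card_mul_card_le_of_degree {c : ℕ} (hdeg : ∀ v, Fintype.card V ≤ c * (G.degree v + 1))
    (A : Finset V) : #A * Fintype.card V ≤ c * (#A * #A) + c * cutEdges G A :=
  calc #A * Fintype.card V = ∑ _v ∈ A, Fintype.card V := by rw [Finset.sum_const, smul_eq_mul]
    _ ≤ ∑ v ∈ A, c * (#{u ∈ Aᶜ | G.Adj v u} + #A) := Finset.sum_le_sum fun v hv =>
        (hdeg v).trans (Nat.mul_le_mul_left c (G.degree_add_one_le hv))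
    _ = c * (#A * #A) + c * cutEdges G A := by
        rw [← Finset.mul_sum, Finset.sum_add_distrib, ← cutEdges_eq_sum, Finset.sum_const,
          smul_eq_mul]
        ring

lemma cutEdges_pos_of_mul_card_le {c : ℕ} (hdeg : ∀ v, Fintype.card V ≤ c * (G.degree v + 1))
    {A : Finset V} (hA : A.Nonempty) (hsmall : (c + 1) * #A ≤ Fintype.card V) :
    0 < cutEdges G A := by
  have hcount := G.card_mul_card_le_of_degree hdeg A
  have := hA.card_pos
  by_contra! h
  rw [Nat.le_zero.1 h] at hcount
  nlinarith

lemma card_le_mul_max_cutEdges {c : ℕ} (hdeg : ∀ v, Fintype.card V ≤ c * (G.degree v + 1))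
    {A : Finset V} (hA : A.Nonempty) (hsmall : (c + 1) * #A ≤ Fintype.card V) :
    Fintype.card V ≤ c * (max (cutEdges G A) c + 1) := by
  have hcount := G.card_mul_card_le_of_degree hdeg A
  have := hA.card_pos
  obtain ⟨m, hn⟩ : ∃ m, Fintype.card V = c * #A + m :=
    Nat.exists_eq_add_of_le (by nlinarith)
  rw [hn] at hcount hsmall ⊢
  have hAm : #A * m ≤ c * cutEdges G A := by nlinarith
  rcases le_or_gt c m with hcm | hmc
  · nlinarith [le_max_left (cutEdges G A) c]
  · nlinarith [le_max_right (cutEdges G A) c]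

variable {G}

lemma cutRel_equivalence (α : ℕ) : Equivalence (cutRel G α) where
  refl _ _ _ := Iff.rfl
  symm h S hS := (h S hS).symm
  trans h h' S hS := (h S hS).trans (h' S hS)

lemma cutClass_eq_of_cutRel {α : ℕ} {u v : V} (h : cutRel G α u v) :
    cutClass G α u = cutClass G α v := by
  ext x
  simp only [cutClass, Finset.mem_filter, Finset.mem_univ, true_and]
  exact ⟨fun hx => (cutRel_equivalence α).trans hx h,
    fun hx => (cutRel_equivalence α).trans hx ((cutRel_equivalence α).symm h)⟩

lemma exists_separating_of_not_cutRel {α : ℕ} {u v : V} (h : ¬ cutRel G α u v) :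
    ∃ S, cutEdges G S ≤ α ∧ u ∈ S ∧ v ∉ S := by
  simp only [cutRel, not_forall, exists_prop] at h
  obtain ⟨S, hS, huv⟩ := h
  by_cases hu : u ∈ S
  · exact ⟨S, hS, hu, fun hv => huv ⟨fun _ => hv, fun _ => hu⟩⟩
  · refine ⟨Sᶜ, (G.cutEdges_compl S).trans_le hS, Finset.mem_compl.2 hu, fun hv => ?_⟩
    exact huv ⟨fun hu' => absurd hu' hu, fun hv' => absurd hv' (Finset.mem_compl.1 hv)⟩

lemma exists_pairwise_not_cutRel {α : ℕ} {t : Finset (Finset V)} (ht : t ⊆ cutClasses G α) :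
    ∃ w : t → V, Pairwise fun K L => ¬ cutRel G α (w K) (w L) := by
  have hrep : ∀ K : t, ∃ v, cutClass G α v = K := fun K => by
    simpa [cutClasses] using ht K.2
  choose w hw using hrep
  exact ⟨w, fun K L hKL hKL' =>
    hKL (Subtype.ext (by rw [← hw, ← hw, cutClass_eq_of_cutRel hKL']))⟩

lemma exists_pairwiseDisjoint_cutEdges_le {ι : Type*} [Fintype ι] [DecidableEq ι] {α : ℕ}
    (w : ι → V) (hw : Pairwise fun i j => ¬ cutRel G α (w i) (w j)) :
    ∃ A : ι → Finset V, Pairwise (Disjoint on A) ∧ (∀ i, w i ∈ A i) ∧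
      ∀ i, cutEdges G (A i) ≤ (Fintype.card ι - 1) * (2 * α) := by
  have hsep : ∀ i j, ∃ S, cutEdges G S ≤ α ∧ (i ≠ j → w i ∈ S ∧ w j ∉ S) := fun i j => by
    by_cases hij : i = j
    · exact ⟨∅, by simp [cutEdges, crossEdges], fun h => absurd hij h⟩
    · obtain ⟨S, hS, hi, hj⟩ := exists_separating_of_not_cutRel (hw hij)
      exact ⟨S, hS, fun _ => ⟨hi, hj⟩⟩
  choose T hTcut hTsep using hsep
  -- `A i ⊆ (T j i)ᶜ` and `A j ⊆ T j i` keep `A i` and `A j` apart.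
  refine ⟨fun i => (univ.erase i).inf fun j => T i j ∩ (T j i)ᶜ, fun i j hij => ?_, fun i => ?_,
    fun i => ?_⟩
  · refine Finset.disjoint_left.2 fun x hxi hxj => ?_
    simp only [Finset.mem_inf, Finset.mem_erase, Finset.mem_univ, and_true, Finset.mem_inter,
      Finset.mem_compl] at hxi hxj
    exact (hxi j hij.symm).2 (hxj i hij).1
  · simp only [Finset.mem_inf, Finset.mem_erase, Finset.mem_univ, and_true, Finset.mem_inter,
      Finset.mem_compl]
    exact fun j hji => ⟨(hTsep i j (Ne.symm hji)).1, (hTsep j i hji).2⟩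
  · calc cutEdges G ((univ.erase i).inf fun j => T i j ∩ (T j i)ᶜ)
        ≤ ∑ j ∈ univ.erase i, cutEdges G (T i j ∩ (T j i)ᶜ) := G.cutEdges_inf_le _ _
      _ ≤ ∑ j ∈ univ.erase i, 2 * α := Finset.sum_le_sum fun j _ => by
          have := G.cutEdges_inter_le (T i j) (T j i)ᶜ
          rw [cutEdges_compl] at this
          linarith [hTcut i j, hTcut j i]
      _ = (Fintype.card ι - 1) * (2 * α) := by
          rw [Finset.sum_const, Finset.card_erase_of_mem (Finset.mem_univ i), Finset.card_univ,
            smul_eq_mul]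

end SimpleGraph

lemma Finset.exists_card_mul_card_le {α ι : Type*} [Fintype α] [Fintype ι] [Nonempty ι]
    (A : ι → Finset α) (hA : Pairwise (Disjoint on A)) :
    ∃ i, Fintype.card ι * #(A i) ≤ Fintype.card α := by
  have hsum : ∑ i, #(A i) ≤ Fintype.card α := by
    classical
    rw [← Finset.card_biUnion fun i _ j _ hij => hA hij]
    exact Finset.card_le_univ _
  obtain ⟨i, -, hi⟩ := Finset.exists_le_of_sum_le (f := fun i => Fintype.card ι * #(A i))
    (g := fun _ => Fintype.card α) Finset.univ_nonempty (by
      rw [← Finset.mul_sum, Finset.sum_const, Finset.card_univ, smul_eq_mul]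
      exact Nat.mul_le_mul_left _ hsum)
  exact ⟨i, hi⟩

lemma Nat.two_mul_le_two_pow (n : ℕ) : 2 * n ≤ 2 ^ n := by
  cases n with
  | zero => simp
  | succ n => rw [pow_succ]; have := Nat.lt_two_pow_self (n := n); omega

theorem stmt3_general {V : Type*} [Fintype V] [DecidableEq V] (G : SimpleGraph V)
    [DecidableRel G.Adj] (c α : ℕ)
    (hdeg : ∀ v : V, Fintype.card V ≤ c * (G.degree v + 1))
    (hα : c * (2 ^ c * α + 1) < Fintype.card V) :
    (cutClasses G α).card ≤ c := by
  by_contra! hclasses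
  obtain ⟨t, hts, htc⟩ := Finset.exists_subset_card_eq (n := c + 1) hclasses
  obtain ⟨w, hw⟩ := SimpleGraph.exists_pairwise_not_cutRel hts
  obtain ⟨A, hdisj, hwA, hcut⟩ := SimpleGraph.exists_pairwiseDisjoint_cutEdges_le w hw
  have : Nonempty t := Fintype.card_pos_iff.1 (by rw [Fintype.card_coe, htc]; omega)
  obtain ⟨K, hK⟩ := Finset.exists_card_mul_card_le A hdisj
  rw [Fintype.card_coe, htc] at hK hcut
  have hcutK : cutEdges G (A K) ≤ c * (2 * α) := by simpa using hcut K
  have hpos := G.cutEdges_pos_of_mul_card_le hdeg ⟨_, hwA K⟩ hK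
  have hα1 : α ≠ 0 := by rintro rfl; simp at hcutK; omega
  have hmax : max (cutEdges G (A K)) c ≤ 2 ^ c * α :=
    max_le (hcutK.trans (by nlinarith [Nat.two_mul_le_two_pow c]))
      (Nat.lt_two_pow_self.le.trans (Nat.le_mul_of_pos_right _ (Nat.pos_of_ne_zero hα1)))
  have := (G.card_le_mul_max_cutEdges hdeg ⟨_, hwA K⟩ hK).trans
    (Nat.mul_le_mul_left c (Nat.add_le_add_right hmax 1))
  omega

/-- if `c ≥ 2`, every vertex of `G` (on `n` vertices) has degree at least
`n/c − 1`, and `2^c·α < n/c − 1` (i.e. `c·(2^c·α + 1) < n`), then `~_α` has at most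
`c` equivalence classes. -/
theorem stmt3 {V : Type*} [Fintype V] [DecidableEq V] (G : SimpleGraph V)
    [DecidableRel G.Adj] (c α : ℕ) (hc : 2 ≤ c)
    (hdeg : ∀ v : V, Fintype.card V ≤ c * (G.degree v + 1))
    (hα : c * (2 ^ c * α + 1) < Fintype.card V) :
    (cutClasses G α).card ≤ c :=
  stmt3_general G c α hdeg hα
end

section
/- Let c ≥ 2 be an integer and let α : ℕ → ℕ be a function with α(n)/n → 0 as n → ∞. Then there exists N such that for every n ≥ N and every finite simple undirected graph G on a vertex set V of size n in which every vertex has degree at least n/c − 1, the following all hold: (i) every equivalence class of ~_{α(n)} has size at least n/c; (ii) ~_{α(n)} has at most c equivalence classes; (iii) for any two distinct equivalence classes U ≠ U', |edges_G(U, U')| ≤ α(n); and (iv) the number of α(n)-cuts of G is at most 2^(c−1). In particular, the equivalence classes of ~_{α(n)} form an (α(n), n/c)-partition of G of size at most c. -/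
open Finset

/-!
Summing degrees over a nonempty set `S` with at most `b` boundary edges gives
`|S| n ≤ c (|S|² + b)`, so `|S| ≥ n / c` as soon as `c (c + 1) b < n`.
The `~_α` classes are the atoms of the family of sides of `α`-cuts; the boundary of an atom is
covered by its edges to the other atoms, so with `k` atoms each boundary is at most `(k - 1) α`.
Adding the sides one at a time at most doubles the number of atoms: from at most `c` atoms we
get at most `2c`, each with boundary at most `(2c - 1) α`, hence each of size at least `n / c`,
hence again at most `c` of them. Every `α`-cut has a side avoiding a fixed vertex `v₀`, and that
side is a union of atoms other than the atom of `v₀`, so there are at most `2^(c-1)` cuts.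
Finally `α(n) = o(n)` gives `c (c + 1) (2c - 1) α(n) < n` for large `n`.
-/

variable {V : Type*} [Fintype V] [DecidableEq V]

section Atoms

def atom (ℱ : Finset (Finset V)) (v : V) : Finset V :=
  univ.filter fun u => ∀ S ∈ ℱ, (u ∈ S ↔ v ∈ S)

def atoms (ℱ : Finset (Finset V)) : Finset (Finset V) :=
  univ.image (atom ℱ)

variable {ℱ : Finset (Finset V)}

lemma mem_atom {u v : V} : u ∈ atom ℱ v ↔ ∀ S ∈ ℱ, (u ∈ S ↔ v ∈ S) := by
  simp [atom]

lemma mem_atom_self (v : V) : v ∈ atom ℱ v :=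
  mem_atom.2 fun _ _ => Iff.rfl

lemma atom_mem_atoms (v : V) : atom ℱ v ∈ atoms ℱ :=
  mem_image_of_mem _ (mem_univ v)

lemma atom_eq_of_mem {u v : V} (h : u ∈ atom ℱ v) : atom ℱ u = atom ℱ v := by
  ext w
  simp only [mem_atom] at h ⊢
  exact ⟨fun hw S hS => (hw S hS).trans (h S hS), fun hw S hS => (hw S hS).trans (h S hS).symm⟩

lemma atoms_pairwiseDisjoint : (atoms ℱ : Set (Finset V)).PairwiseDisjoint id := by
  rintro _ hA _ hB hAB
  obtain ⟨u, -, rfl⟩ := mem_image.1 hA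
  obtain ⟨v, -, rfl⟩ := mem_image.1 hB
  refine disjoint_left.2 fun w hwu hwv => hAB ?_
  exact (atom_eq_of_mem hwu).symm.trans (atom_eq_of_mem hwv)

lemma sum_card_atoms : ∑ A ∈ atoms ℱ, A.card = Fintype.card V := by
  change ∑ A ∈ atoms ℱ, (id A).card = _
  rw [← card_biUnion atoms_pairwiseDisjoint, ← card_univ]
  congr 1
  exact eq_univ_of_forall fun v => mem_biUnion.2 ⟨_, atom_mem_atoms v, mem_atom_self v⟩

lemma nonempty_of_mem_atoms {A : Finset V} (hA : A ∈ atoms ℱ) : A.Nonempty := by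
  obtain ⟨v, -, rfl⟩ := mem_image.1 hA
  exact ⟨v, mem_atom_self v⟩

lemma exists_separating_of_mem_atoms {A B : Finset V} (hA : A ∈ atoms ℱ) (hB : B ∈ atoms ℱ)
    (hAB : A ≠ B) : ∃ S ∈ ℱ, A ⊆ S ∧ B ⊆ Sᶜ ∨ A ⊆ Sᶜ ∧ B ⊆ S := by
  obtain ⟨u, -, rfl⟩ := mem_image.1 hA
  obtain ⟨v, -, rfl⟩ := mem_image.1 hB
  have : ¬ ∀ S ∈ ℱ, (u ∈ S ↔ v ∈ S) := fun h => hAB (atom_eq_of_mem (mem_atom.2 h))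
  push Not at this
  obtain ⟨S, hS, huv⟩ := this
  have side : ∀ x w, w ∈ atom ℱ x → (w ∈ S ↔ x ∈ S) := fun x w hw => mem_atom.1 hw S hS
  refine ⟨S, hS, ?_⟩
  rcases huv with ⟨hu, hv⟩ | ⟨hu, hv⟩
  · exact .inl ⟨fun w hw => (side u w hw).2 hu,
      fun w hw => mem_compl.2 fun h => hv ((side v w hw).1 h)⟩
  · exact .inr ⟨fun w hw => mem_compl.2 fun h => hu ((side u w hw).1 h),
      fun w hw => (side v w hw).2 hv⟩

lemma card_atoms_empty_le : (atoms (∅ : Finset (Finset V))).card ≤ 1 := by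
  refine card_le_one.2 fun A hA B hB => ?_
  obtain ⟨u, -, rfl⟩ := mem_image.1 hA
  obtain ⟨v, -, rfl⟩ := mem_image.1 hB
  exact atom_eq_of_mem (mem_atom.2 fun S hS => absurd hS (notMem_empty S))

lemma card_atoms_insert_le (T : Finset V) :
    (atoms (insert T ℱ)).card ≤ 2 * (atoms ℱ).card := by
  have hsub : atoms (insert T ℱ) ⊆ (atoms ℱ).image (· ∩ T) ∪ (atoms ℱ).image (· \ T) := by
    rintro _ hA
    obtain ⟨v, -, rfl⟩ := mem_image.1 hA
    by_cases hv : v ∈ T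
    · refine mem_union_left _ (mem_image.2 ⟨atom ℱ v, atom_mem_atoms v, ?_⟩)
      ext u
      simp only [mem_inter, mem_atom, forall_mem_insert, hv, iff_true]
      tauto
    · refine mem_union_right _ (mem_image.2 ⟨atom ℱ v, atom_mem_atoms v, ?_⟩)
      ext u
      simp only [mem_sdiff, mem_atom, forall_mem_insert, hv, iff_false]
      tauto
  calc (atoms (insert T ℱ)).card
      ≤ ((atoms ℱ).image (· ∩ T)).card + ((atoms ℱ).image (· \ T)).card :=
        (card_le_card hsub).trans (card_union_le _ _)
    _ ≤ (atoms ℱ).card + (atoms ℱ).card := add_le_add card_image_le card_image_le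
    _ = 2 * (atoms ℱ).card := (two_mul _).symm

lemma card_atoms_le_of_le_mul_card {c : ℕ} (hV : 0 < Fintype.card V)
    (h : ∀ A ∈ atoms ℱ, Fintype.card V ≤ c * A.card) : (atoms ℱ).card ≤ c := by
  refine le_of_mul_le_mul_right ?_ hV
  calc (atoms ℱ).card * Fintype.card V ≤ ∑ A ∈ atoms ℱ, c * A.card := by
        simpa using sum_le_sum h
    _ = c * Fintype.card V := by rw [← mul_sum, sum_card_atoms]

lemma card_filter_notMem_le (v₀ : V) :
    (ℱ.filter (v₀ ∉ ·)).card ≤ 2 ^ ((atoms ℱ).card - 1) := by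
  have mem_iff_atom_mem {S : Finset V} (hS : S ∈ ℱ) (v : V) :
      v ∈ S ↔ atom ℱ v ∈ (atoms ℱ).filter (· ⊆ S) := by
    simp only [mem_filter, atom_mem_atoms, true_and]
    exact ⟨fun hv u hu => (mem_atom.1 hu S hS).2 hv, fun h => h (mem_atom_self v)⟩
  calc (ℱ.filter (v₀ ∉ ·)).card ≤ (((atoms ℱ).erase (atom ℱ v₀)).powerset).card := by
        refine card_le_card_of_injOn (fun S => (atoms ℱ).filter (· ⊆ S)) ?_ ?_
        · intro S hS
          rw [mem_coe, mem_filter] at hS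
          refine mem_powerset.2 fun A hA => mem_erase.2 ⟨?_, (mem_filter.1 hA).1⟩
          rintro rfl
          exact hS.2 ((mem_filter.1 hA).2 (mem_atom_self v₀))
        · intro S hS S' hS' h
          rw [mem_coe, mem_filter] at hS hS'
          simp only at h
          ext v
          rw [mem_iff_atom_mem hS.1, mem_iff_atom_mem hS'.1, h]
    _ = 2 ^ ((atoms ℱ).card - 1) := by
        rw [card_powerset, card_erase_of_mem (atom_mem_atoms v₀)]

lemma card_image_pair_le {𝒯 : Finset (Finset V)} (h𝒯 : 𝒯 ⊆ ℱ) (hcompl : ∀ S ∈ ℱ, Sᶜ ∈ ℱ)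
    (v₀ : V) :
    (𝒯.image fun S => ({S, Sᶜ} : Finset (Finset V))).card ≤ (ℱ.filter (v₀ ∉ ·)).card := by
  refine (card_le_card ?_).trans (card_image_le (f := fun S => ({S, Sᶜ} : Finset (Finset V))))
  intro p hp
  obtain ⟨S, hS, rfl⟩ := mem_image.1 hp
  by_cases hv : v₀ ∈ S
  · refine mem_image.2 ⟨Sᶜ, mem_filter.2 ⟨hcompl S (h𝒯 hS), by simpa⟩, ?_⟩
    rw [compl_compl, pair_comm]
  · exact mem_image_of_mem _ (mem_filter.2 ⟨h𝒯 hS, hv⟩)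

end Atoms

section Cuts

variable (G : SimpleGraph V) [DecidableRel G.Adj]

lemma crossEdges_eq_sum (S T : Finset V) :
    crossEdges G S T = ∑ v ∈ S, (T.filter (G.Adj v)).card := by
  rw [crossEdges, card_filter, sum_product]
  simp only [card_filter]

lemma crossEdges_mono {S S' T T' : Finset V} (hS : S ⊆ S') (hT : T ⊆ T') :
    crossEdges G S T ≤ crossEdges G S' T' :=
  card_le_card (filter_subset_filter _ (product_subset_product hS hT))

lemma crossEdges_comm (S T : Finset V) : crossEdges G S T = crossEdges G T S :=
  card_bij' (fun p _ => p.swap) (fun p _ => p.swap) (by simp +contextual [G.adj_comm])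
    (by simp +contextual [G.adj_comm]) (by simp) (by simp)

lemma cutEdges_compl (S : Finset V) : cutEdges G Sᶜ = cutEdges G S := by
  rw [cutEdges, cutEdges, compl_compl, crossEdges_comm]

lemma crossEdges_le_cutEdges {A B S : Finset V} (hA : A ⊆ S) (hB : B ⊆ Sᶜ) :
    crossEdges G A B ≤ cutEdges G S :=
  crossEdges_mono G hA hB

lemma crossEdges_biUnion_le (A : Finset V) (𝒞 : Finset (Finset V)) :
    crossEdges G A (𝒞.biUnion id) ≤ ∑ B ∈ 𝒞, crossEdges G A B := by
  refine (card_le_card ?_).trans (card_biUnion_le (s := 𝒞)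
    (t := fun B => (A ×ˢ B).filter fun p => G.Adj p.1 p.2))
  intro p hp
  simp only [mem_filter, mem_product, mem_biUnion, id] at hp ⊢
  obtain ⟨⟨hA, B, hB, hpB⟩, hadj⟩ := hp
  exact ⟨B, hB, ⟨hA, hpB⟩, hadj⟩

lemma sum_degree_add_one_le (S : Finset V) :
    ∑ v ∈ S, (G.degree v + 1) ≤ S.card * S.card + cutEdges G S := by
  have inside : ∀ v ∈ S, (S.filter (G.Adj v)).card + 1 ≤ S.card := fun v hv => by
    have : S.filter (G.Adj v) ⊆ S.erase v := fun u hu =>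
      mem_erase.2 ⟨fun h => G.irrefl (h ▸ (mem_filter.1 hu).2), (mem_filter.1 hu).1⟩
    have := card_le_card this
    have := card_erase_add_one hv
    omega
  have split : ∀ v, G.degree v = (S.filter (G.Adj v)).card + (Sᶜ.filter (G.Adj v)).card := by
    intro v
    rw [← G.card_neighborFinset_eq_degree, G.neighborFinset_eq_filter, ← union_compl S,
      filter_union, card_union_of_disjoint (disjoint_filter_filter disjoint_compl_right)]
  calc ∑ v ∈ S, (G.degree v + 1)
      = ∑ v ∈ S, ((S.filter (G.Adj v)).card + 1) + ∑ v ∈ S, (Sᶜ.filter (G.Adj v)).card := by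
        rw [← sum_add_distrib]
        exact sum_congr rfl fun v _ => by rw [split]; ring
    _ ≤ ∑ _v ∈ S, S.card + cutEdges G S := by
        rw [cutEdges, crossEdges_eq_sum]
        exact Nat.add_le_add_right (sum_le_sum inside) _
    _ = S.card * S.card + cutEdges G S := by rw [sum_const, smul_eq_mul]

end Cuts

section SmallCuts

variable (G : SimpleGraph V) [DecidableRel G.Adj]

lemma le_mul_card_of_cutEdges_le {c b : ℕ} (hdeg : ∀ v, Fintype.card V ≤ c * (G.degree v + 1))
    {S : Finset V} (hS : S.Nonempty) (hcut : cutEdges G S ≤ b)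
    (hb : c * (c + 1) * b < Fintype.card V) : Fintype.card V ≤ c * S.card := by
  set n := Fintype.card V
  set s := S.card
  have hs : 1 ≤ s := card_pos.2 hS
  have h : s * n ≤ c * (s * s) + c * b :=
    calc s * n = ∑ _v ∈ S, n := by rw [sum_const, smul_eq_mul]
      _ ≤ ∑ v ∈ S, c * (G.degree v + 1) := sum_le_sum fun v _ => hdeg v
      _ = c * ∑ v ∈ S, (G.degree v + 1) := by rw [mul_sum]
      _ ≤ c * (s * s + b) :=
        Nat.mul_le_mul_left c ((sum_degree_add_one_le G S).trans (Nat.add_le_add_left hcut _))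
      _ = c * (s * s) + c * b := mul_add _ _ _
  by_contra! hlt
  have hsb : s ≤ c * b := by nlinarith
  have : n ≤ c * s + c * b := by
    by_contra! h'
    nlinarith
  nlinarith

variable {G} {ℱ : Finset (Finset V)} {a : ℕ}

lemma crossEdges_le_of_mem_atoms (hℱ : ∀ S ∈ ℱ, cutEdges G S ≤ a) {A B : Finset V}
    (hA : A ∈ atoms ℱ) (hB : B ∈ atoms ℱ) (hAB : A ≠ B) : crossEdges G A B ≤ a := by
  obtain ⟨S, hS, ⟨hAS, hBS⟩ | ⟨hAS, hBS⟩⟩ := exists_separating_of_mem_atoms hA hB hAB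
  · exact (crossEdges_le_cutEdges G hAS hBS).trans (hℱ S hS)
  · rw [crossEdges_comm]
    exact (crossEdges_le_cutEdges G hBS hAS).trans (hℱ S hS)

lemma cutEdges_le_of_mem_atoms (hℱ : ∀ S ∈ ℱ, cutEdges G S ≤ a) {A : Finset V}
    (hA : A ∈ atoms ℱ) : cutEdges G A ≤ ((atoms ℱ).card - 1) * a := by
  have hcover : Aᶜ ⊆ ((atoms ℱ).erase A).biUnion id := fun u hu =>
    mem_biUnion.2 ⟨atom ℱ u, mem_erase.2 ⟨fun h => mem_compl.1 hu (h ▸ mem_atom_self u),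
      atom_mem_atoms u⟩, mem_atom_self u⟩
  calc cutEdges G A ≤ crossEdges G A (((atoms ℱ).erase A).biUnion id) :=
        crossEdges_mono G subset_rfl hcover
    _ ≤ ∑ B ∈ (atoms ℱ).erase A, crossEdges G A B := crossEdges_biUnion_le G A _
    _ ≤ ∑ _B ∈ (atoms ℱ).erase A, a := sum_le_sum fun B hB =>
        crossEdges_le_of_mem_atoms hℱ hA (mem_erase.1 hB).2 (mem_erase.1 hB).1.symm
    _ = ((atoms ℱ).card - 1) * a := by rw [sum_const, smul_eq_mul, card_erase_of_mem hA]

lemma le_mul_card_of_mem_atoms {c b : ℕ} (hdeg : ∀ v, Fintype.card V ≤ c * (G.degree v + 1))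
    (hℱ : ∀ S ∈ ℱ, cutEdges G S ≤ a) (hk : ((atoms ℱ).card - 1) * a ≤ b)
    (hb : c * (c + 1) * b < Fintype.card V) {A : Finset V} (hA : A ∈ atoms ℱ) :
    Fintype.card V ≤ c * A.card :=
  le_mul_card_of_cutEdges_le G hdeg (nonempty_of_mem_atoms hA)
    ((cutEdges_le_of_mem_atoms hℱ hA).trans hk) hb

lemma card_atoms_le {c : ℕ} (hdeg : ∀ v, Fintype.card V ≤ c * (G.degree v + 1))
    (hsmall : c * (c + 1) * ((2 * c - 1) * a) < Fintype.card V)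
    (hℱ : ∀ S ∈ ℱ, cutEdges G S ≤ a) : (atoms ℱ).card ≤ c := by
  have hV : 0 < Fintype.card V := by omega
  induction ℱ using Finset.induction_on with
  | empty =>
    refine card_atoms_le_of_le_mul_card hV fun A hA =>
      le_mul_card_of_mem_atoms hdeg hℱ (Nat.mul_le_mul_right a ?_) hsmall hA
    have := card_atoms_empty_le (V := V)
    omega
  | insert T ℱ _ ih =>
    have := ih fun S hS => hℱ S (mem_insert_of_mem hS)
    have := card_atoms_insert_le (ℱ := ℱ) T
    exact card_atoms_le_of_le_mul_card hV fun A hA =>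
      le_mul_card_of_mem_atoms hdeg hℱ (Nat.mul_le_mul_right a (by omega)) hsmall hA

variable (G a)

def smallCutSets : Finset (Finset V) :=
  univ.filter fun S => cutEdges G S ≤ a

lemma cutClasses_eq_atoms : cutClasses G a = atoms (smallCutSets G a) := by
  refine image_congr fun v _ => ?_
  ext u
  simp only [cutClass, atom, smallCutSets, mem_filter, mem_univ, true_and]
  rfl

end SmallCuts

lemma eventually_mul_lt_of_tendsto_div_atTop {α : ℕ → ℕ}
    (hα : Filter.Tendsto (fun n => (α n : ℝ) / n) Filter.atTop (nhds 0)) (K : ℕ) :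
    ∀ᶠ n in Filter.atTop, K * α n < n := by
  have hK : (0 : ℝ) < 1 / (K + 1) := by positivity
  filter_upwards [hα.eventually (gt_mem_nhds hK), Filter.eventually_gt_atTop 0] with n h hn
  have hn' : (0 : ℝ) < n := by exact_mod_cast hn
  rw [div_lt_div_iff₀ hn' (by positivity)] at h
  have : (K : ℝ) * α n < n := by nlinarith [(α n).cast_nonneg (α := ℝ)]
  exact_mod_cast this

theorem stmt6_general (c : ℕ) (α : ℕ → ℕ)
    (hα : Filter.Tendsto (fun n => (α n : ℝ) / (n : ℝ)) Filter.atTop (nhds 0)) :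
    ∃ N : ℕ, ∀ n ≥ N, ∀ (V : Type) [Fintype V] [DecidableEq V],
      ∀ (G : SimpleGraph V) [DecidableRel G.Adj],
      Fintype.card V = n →
      (∀ v : V, n ≤ c * (G.degree v + 1)) →
      ((∀ U ∈ cutClasses G (α n), n ≤ c * U.card) ∧
       (cutClasses G (α n)).card ≤ c ∧
       (∀ U ∈ cutClasses G (α n), ∀ U' ∈ cutClasses G (α n), U ≠ U' →
          crossEdges G U U' ≤ α n) ∧
       ((Finset.univ.filter fun S : Finset V =>
            S ≠ ∅ ∧ S ≠ Finset.univ ∧ cutEdges G S ≤ α n).image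
              fun S => ({S, Sᶜ} : Finset (Finset V))).card ≤ 2 ^ (c - 1)) := by
  obtain ⟨N, hN⟩ := Filter.eventually_atTop.1
    (eventually_mul_lt_of_tendsto_div_atTop hα (c * (c + 1) * (2 * c - 1)))
  refine ⟨N, fun n hn V _ _ G _ hcard hdeg => ?_⟩
  subst hcard
  set a := α (Fintype.card V)
  have hsmall : c * (c + 1) * ((2 * c - 1) * a) < Fintype.card V := by
    rw [← mul_assoc]
    exact hN _ hn
  have hℱ : ∀ S ∈ smallCutSets G a, cutEdges G S ≤ a := fun S hS => (mem_filter.1 hS).2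
  have hcount := card_atoms_le hdeg hsmall hℱ
  obtain ⟨v₀⟩ : Nonempty V := Fintype.card_pos_iff.1 (by omega)
  rw [cutClasses_eq_atoms]
  refine ⟨fun A hA => le_mul_card_of_mem_atoms hdeg hℱ ?_ hsmall hA, hcount,
    fun A hA B hB => crossEdges_le_of_mem_atoms hℱ hA hB, ?_⟩
  · exact Nat.mul_le_mul_right _ (by omega)
  calc _ ≤ ((smallCutSets G a).filter (v₀ ∉ ·)).card :=
        card_image_pair_le (fun S hS => mem_filter.2 ⟨mem_univ S, (mem_filter.1 hS).2.2.2⟩)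
          (fun S hS => mem_filter.2 ⟨mem_univ _, (cutEdges_compl G S).trans_le (hℱ S hS)⟩) v₀
    _ ≤ 2 ^ ((atoms (smallCutSets G a)).card - 1) := card_filter_notMem_le v₀
    _ ≤ 2 ^ (c - 1) := Nat.pow_le_pow_right two_pos (by omega)

/-- for `c ≥ 2` and a sublinear `α : ℕ → ℕ` (i.e. `α(n)/n → 0`), for all
sufficiently large `n` and every graph `G` on `n` vertices of minimum degree at least
`n/c − 1`: (i) every `~_{α n}`-class has size at least `n/c`; (ii) there are at most `c`
classes; (iii) distinct classes have at most `α n` crossing edges; (iv) the number of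
`α(n)`-cuts of `G` is at most `2^(c−1)`. -/
theorem stmt6 (c : ℕ) (hc : 2 ≤ c) (α : ℕ → ℕ)
    (hα : Filter.Tendsto (fun n => (α n : ℝ) / (n : ℝ)) Filter.atTop (nhds 0)) :
    ∃ N : ℕ, ∀ n ≥ N, ∀ (V : Type) [Fintype V] [DecidableEq V],
      ∀ (G : SimpleGraph V) [DecidableRel G.Adj],
      Fintype.card V = n →
      (∀ v : V, n ≤ c * (G.degree v + 1)) →
      ((∀ U ∈ cutClasses G (α n), n ≤ c * U.card) ∧
       (cutClasses G (α n)).card ≤ c ∧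
       (∀ U ∈ cutClasses G (α n), ∀ U' ∈ cutClasses G (α n), U ≠ U' →
          crossEdges G U U' ≤ α n) ∧
       ((Finset.univ.filter fun S : Finset V =>
            S ≠ ∅ ∧ S ≠ Finset.univ ∧ cutEdges G S ≤ α n).image
              fun S => ({S, Sᶜ} : Finset (Finset V))).card ≤ 2 ^ (c - 1)) :=
  stmt6_general c α hα
end
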